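/- arXiv:math/0405003 — 2 statements merged into one kernel-verified Lean document; each statement's English description precedes it below -/
import Mathlib

section
/- Let τ : ℝ → ℝ be a cutoff reparameterization and n ≥ 1. Define φ_τ(f)(t) = τ′(t) · f(τ(t)) for f : ℝ → ℝⁿ. Then: (i) φ_τ is linear in f; (ii) if f is C¹ on [0,1], then φ_τ(f) is C¹ on [0,1], with derivative τ″(t) f(τ(t)) + τ′(t)² f′(τ(t)), and φ_τ(f) satisfies the A₀-boundary conditions, i.e. φ_τ(f)(0) = φ_τ(f)(1) = 0 and (φ_τ f)′(0) = (φ_τ f)′(1) = 0; (iii) there is a constant C > 0 (depending only on τ) such that ‖φ_τ(f)‖_{C¹} ≤ C ‖f‖_{C¹} for all f that are C¹ on [0,1]; (iv) φ_τ is injective on continuous functions: if f is continuous on [0,1] and τ′(t) f(τ(t)) = 0 for all t ∈ [0,1], then f = 0 on [0,1]. -/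
/-!
Since `τ` is constant on `(-∞, 0]` and on `[1, ∞)`, both `τ′` and `τ″` vanish at `0` and `1`,
which gives the A₀-boundary conditions; the derivative is the product and chain rule, and the
C¹-bound comes from bounding `|τ′|` and `|τ″|` on the compact interval `[0, 1]`, which `τ` maps
into itself because it is increasing there. For injectivity, `τ` maps `(0, 1)` onto itself by the
intermediate value theorem and `τ′ > 0` there, so `f` vanishes on `(0, 1)`, hence on `[0, 1]`.
-/

open Set

noncomputable section

/-- The reparameterization operator `φ_τ(f)(t) = τ′(t) • f(τ(t))`. -/
def phiTau {n : ℕ} (τ : ℝ → ℝ) (f : ℝ → EuclideanSpace ℝ (Fin n)) :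
    ℝ → EuclideanSpace ℝ (Fin n) :=
  fun t => deriv τ t • f (τ t)

/-- The derivative of `φ_τ(f)`: `τ″(t) f(τ(t)) + τ′(t)² f′(τ(t))`. -/
def phiTauDeriv {n : ℕ} (τ : ℝ → ℝ) (f f' : ℝ → EuclideanSpace ℝ (Fin n)) :
    ℝ → EuclideanSpace ℝ (Fin n) :=
  fun t => deriv (deriv τ) t • f (τ t) + ((deriv τ t) ^ 2) • f' (τ t)

/-- The C¹-norm `‖f‖_{C¹} = sup_{[0,1]} ‖f‖ + sup_{[0,1]} ‖f′‖` (with `f'` the derivative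
data of `f`). -/
def c1Norm {n : ℕ} (f f' : ℝ → EuclideanSpace ℝ (Fin n)) : ℝ :=
  (⨆ t : Icc (0:ℝ) 1, ‖f (t:ℝ)‖) + (⨆ t : Icc (0:ℝ) 1, ‖f' (t:ℝ)‖)

section ConstantOnHalfLine

variable {E : Type*} [NormedAddCommGroup E] [NormedSpace ℝ E] {g : ℝ → E} {a t : ℝ} {c : E}

theorem deriv_eq_zero_of_forall_le_eq (hg : DifferentiableAt ℝ g t) (hc : ∀ s ≤ a, g s = c)
    (ht : t ≤ a) : deriv g t = 0 :=
  (uniqueDiffOn_Iic a t ht).eq_deriv _ hg.hasDerivAt.hasDerivWithinAt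
    ((hasDerivWithinAt_const t _ c).congr (fun s hs => hc s hs) (hc t ht))

theorem deriv_eq_zero_of_forall_ge_eq (hg : DifferentiableAt ℝ g t) (hc : ∀ s, a ≤ s → g s = c)
    (ht : a ≤ t) : deriv g t = 0 :=
  (uniqueDiffOn_Ici a t ht).eq_deriv _ hg.hasDerivAt.hasDerivWithinAt
    ((hasDerivWithinAt_const t _ c).congr (fun s hs => hc s hs) (hc t ht))

end ConstantOnHalfLine

theorem IsCompact.norm_le_iSup_norm {X E : Type*} [TopologicalSpace X] [SeminormedAddGroup E]
    {f : X → E} {s : Set X} {x : X} (hs : IsCompact s) (hf : ContinuousOn f s) (hx : x ∈ s) :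
    ‖f x‖ ≤ ⨆ y : s, ‖f y‖ := by
  obtain ⟨C, hC⟩ := hs.exists_bound_of_continuousOn hf
  exact le_ciSup (f := fun y : s => ‖f y‖) ⟨C, by rintro _ ⟨y, rfl⟩; exact hC y y.2⟩ ⟨x, hx⟩

section Cutoff

variable {τ : ℝ → ℝ}

theorem deriv_and_deriv_deriv_eq_zero_of_forall_le_eq (hτ : ContDiff ℝ 2 τ) {a c : ℝ}
    (hc : ∀ s ≤ a, τ s = c) : deriv τ a = 0 ∧ deriv (deriv τ) a = 0 := by
  have hτ' : ∀ s ≤ a, deriv τ s = 0 := fun s hs =>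
    deriv_eq_zero_of_forall_le_eq (hτ.differentiable (by norm_num) s) hc hs
  exact ⟨hτ' a le_rfl,
    deriv_eq_zero_of_forall_le_eq (hτ.differentiable_deriv_two a) hτ' le_rfl⟩

theorem deriv_and_deriv_deriv_eq_zero_of_forall_ge_eq (hτ : ContDiff ℝ 2 τ) {a c : ℝ}
    (hc : ∀ s, a ≤ s → τ s = c) : deriv τ a = 0 ∧ deriv (deriv τ) a = 0 := by
  have hτ' : ∀ s, a ≤ s → deriv τ s = 0 := fun s hs =>
    deriv_eq_zero_of_forall_ge_eq (hτ.differentiable (by norm_num) s) hc hs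
  exact ⟨hτ' a le_rfl,
    deriv_eq_zero_of_forall_ge_eq (hτ.differentiable_deriv_two a) hτ' le_rfl⟩

theorem ContDiff.exists_pos_bound_deriv_deriv (hτ : ContDiff ℝ 2 τ) {s : Set ℝ}
    (hs : IsCompact s) : ∃ M > 0, ∀ t ∈ s, |deriv τ t| ≤ M ∧ |deriv (deriv τ) t| ≤ M := by
  obtain ⟨M₁, hM₁⟩ := hs.exists_bound_of_continuousOn
    (hτ.continuous_deriv (by norm_num)).continuousOn
  obtain ⟨M₂, hM₂⟩ := hs.exists_bound_of_continuousOn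
    (hτ.deriv' (n := 1)).continuous_deriv_one.continuousOn
  exact ⟨max (max M₁ M₂) 1, zero_lt_one.trans_le (le_max_right _ _), fun t ht =>
    ⟨(hM₁ t ht).trans (le_max_of_le_left (le_max_left _ _)),
      (hM₂ t ht).trans (le_max_of_le_left (le_max_right _ _))⟩⟩

theorem mapsTo_Icc_of_deriv_pos (hτ : Continuous τ) (hτ0 : τ 0 = 0) (hτ1 : τ 1 = 1)
    (hτ' : ∀ t ∈ Ioo (0:ℝ) 1, 0 < deriv τ t) : MapsTo τ (Icc 0 1) (Icc 0 1) := by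
  have hmono : StrictMonoOn τ (Icc 0 1) :=
    strictMonoOn_of_deriv_pos (convex_Icc 0 1) hτ.continuousOn (by rwa [interior_Icc])
  simpa only [hτ0, hτ1] using hmono.monotoneOn.mapsTo_Icc

end Cutoff

section PhiTau

variable {n : ℕ} {τ : ℝ → ℝ} {f f' : ℝ → EuclideanSpace ℝ (Fin n)}

theorem phiTau_smul_add_smul (g : ℝ → EuclideanSpace ℝ (Fin n)) (c d t : ℝ) :
    phiTau τ (fun s => c • f s + d • g s) t = c • phiTau τ f t + d • phiTau τ g t := by
  simp only [phiTau, smul_add, smul_comm (deriv τ t)]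

theorem phiTau_eq_zero_of_deriv_eq_zero {t : ℝ} (h : deriv τ t = 0) : phiTau τ f t = 0 := by
  simp [phiTau, h]

theorem phiTauDeriv_eq_zero_of_deriv_eq_zero {t : ℝ}
    (h : deriv τ t = 0 ∧ deriv (deriv τ) t = 0) : phiTauDeriv τ f f' t = 0 := by
  simp [phiTauDeriv, h.1, h.2]

theorem hasDerivWithinAt_phiTau {s : Set ℝ} {t : ℝ} (hτ : DifferentiableAt ℝ τ t)
    (hτ' : DifferentiableAt ℝ (deriv τ) t) (hs : MapsTo τ s s)
    (hf : HasDerivWithinAt f (f' (τ t)) s (τ t)) :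
    HasDerivWithinAt (phiTau τ f) (phiTauDeriv τ f f' t) s t := by
  have hfτ : HasDerivWithinAt (f ∘ τ) (deriv τ t • f' (τ t)) s t :=
    hf.scomp t hτ.hasDerivAt.hasDerivWithinAt hs
  have hderiv : phiTauDeriv τ f f' t =
      deriv τ t • deriv τ t • f' (τ t) + deriv (deriv τ) t • (f ∘ τ) t := by
    rw [phiTauDeriv, add_comm, smul_smul, sq, Function.comp_apply]
  rw [hderiv]
  exact hτ'.hasDerivAt.hasDerivWithinAt.smul hfτ

theorem continuousOn_phiTauDeriv {s : Set ℝ} (hτ : ContDiff ℝ 2 τ) (hs : MapsTo τ s s)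
    (hf : ContinuousOn f s) (hf' : ContinuousOn f' s) :
    ContinuousOn (phiTauDeriv τ f f') s := by
  have hτc : ContinuousOn τ s := hτ.continuous.continuousOn
  exact (hτ.deriv' (n := 1)).continuous_deriv_one.continuousOn.smul (hf.comp hτc hs) |>.add <|
    ((hτ.continuous_deriv (by norm_num)).continuousOn.pow 2).smul (hf'.comp hτc hs)

theorem c1Norm_phiTau_le {M : ℝ} (hs : MapsTo τ (Icc 0 1) (Icc 0 1))
    (hM : ∀ t ∈ Icc (0:ℝ) 1, |deriv τ t| ≤ M ∧ |deriv (deriv τ) t| ≤ M)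
    (hf : ContinuousOn f (Icc 0 1)) (hf' : ContinuousOn f' (Icc 0 1)) :
    c1Norm (phiTau τ f) (phiTauDeriv τ f f') ≤ (2 * M + M ^ 2) * c1Norm f f' := by
  have : Nonempty (Icc (0:ℝ) 1) := ⟨⟨0, left_mem_Icc.2 zero_le_one⟩⟩
  set A := ⨆ s : Icc (0:ℝ) 1, ‖f s‖
  set B := ⨆ s : Icc (0:ℝ) 1, ‖f' s‖
  have hA : ∀ t ∈ Icc (0:ℝ) 1, ‖f (τ t)‖ ≤ A := fun t ht =>
    isCompact_Icc.norm_le_iSup_norm hf (hs ht)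
  have hB : ∀ t ∈ Icc (0:ℝ) 1, ‖f' (τ t)‖ ≤ B := fun t ht =>
    isCompact_Icc.norm_le_iSup_norm hf' (hs ht)
  have hM0 : 0 ≤ M := (abs_nonneg _).trans (hM 0 (left_mem_Icc.2 zero_le_one)).1
  have hA0 : 0 ≤ A := Real.iSup_nonneg fun _ => norm_nonneg _
  have hB0 : 0 ≤ B := Real.iSup_nonneg fun _ => norm_nonneg _
  have hphi : (⨆ t : Icc (0:ℝ) 1, ‖phiTau τ f t‖) ≤ M * A := by
    refine ciSup_le fun ⟨t, ht⟩ => ?_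
    rw [phiTau, norm_smul, Real.norm_eq_abs]
    exact mul_le_mul (hM t ht).1 (hA t ht) (norm_nonneg _) hM0
  have hphi' : (⨆ t : Icc (0:ℝ) 1, ‖phiTauDeriv τ f f' t‖) ≤ M * A + M ^ 2 * B := by
    refine ciSup_le fun ⟨t, ht⟩ => (norm_add_le _ _).trans ?_
    rw [norm_smul, norm_smul, Real.norm_eq_abs, Real.norm_eq_abs, abs_pow]
    gcongr
    exacts [(hM t ht).2, hA t ht, (hM t ht).1, hB t ht]
  calc c1Norm (phiTau τ f) (phiTauDeriv τ f f') ≤ M * A + (M * A + M ^ 2 * B) :=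
        add_le_add hphi hphi'
    _ ≤ (2 * M + M ^ 2) * (A + B) := by
        nlinarith [mul_nonneg hM0 hB0, mul_nonneg (sq_nonneg M) hA0]

theorem eqOn_zero_of_phiTau_eqOn_zero (hτ : Continuous τ) (hτ0 : τ 0 = 0) (hτ1 : τ 1 = 1)
    (hτ' : ∀ t ∈ Ioo (0:ℝ) 1, 0 < deriv τ t) (hf : ContinuousOn f (Icc 0 1))
    (hφ : ∀ t ∈ Icc (0:ℝ) 1, phiTau τ f t = 0) : ∀ t ∈ Icc (0:ℝ) 1, f t = 0 := by
  have hIoo : EqOn f 0 (Ioo 0 1) := by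
    rintro _ hs
    have hsurj : Ioo 0 1 ⊆ τ '' Ioo 0 1 := by
      simpa only [hτ0, hτ1] using intermediate_value_Ioo zero_le_one hτ.continuousOn
    obtain ⟨u, hu, rfl⟩ := hsurj hs
    exact (smul_eq_zero.mp (hφ u (Ioo_subset_Icc_self hu))).resolve_left (hτ' u hu).ne'
  refine hIoo.of_subset_closure hf continuousOn_const Ioo_subset_Icc_self ?_
  rw [closure_Ioo zero_ne_one]

end PhiTau

theorem phiTau_properties_general (n : ℕ) (τ : ℝ → ℝ)
    (hτ : ContDiff ℝ (⊤ : ℕ∞) τ)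
    (hτ0 : ∀ t : ℝ, t ≤ 0 → τ t = 0)
    (hτ1 : ∀ t : ℝ, 1 ≤ t → τ t = 1)
    (hτ' : ∀ t ∈ Ioo (0:ℝ) 1, 0 < deriv τ t) :
    -- (i) linearity
    (∀ (f g : ℝ → EuclideanSpace ℝ (Fin n)) (c d : ℝ) (t : ℝ),
      phiTau τ (fun s => c • f s + d • g s) t = c • phiTau τ f t + d • phiTau τ g t) ∧
    -- (ii) φ_τ(f) is C¹ with the stated derivative, and satisfies the A₀-boundary conditions
    (∀ (f f' : ℝ → EuclideanSpace ℝ (Fin n)),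
      (∀ t ∈ Icc (0:ℝ) 1, HasDerivWithinAt f (f' t) (Icc (0:ℝ) 1) t) →
      ContinuousOn f' (Icc (0:ℝ) 1) →
      (∀ t ∈ Icc (0:ℝ) 1,
        HasDerivWithinAt (phiTau τ f) (phiTauDeriv τ f f' t) (Icc (0:ℝ) 1) t) ∧
      ContinuousOn (phiTauDeriv τ f f') (Icc (0:ℝ) 1) ∧
      phiTau τ f 0 = 0 ∧ phiTau τ f 1 = 0 ∧
      phiTauDeriv τ f f' 0 = 0 ∧ phiTauDeriv τ f f' 1 = 0) ∧
    -- (iii) boundedness for the C¹-norms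
    (∃ C > (0:ℝ), ∀ (f f' : ℝ → EuclideanSpace ℝ (Fin n)),
      (∀ t ∈ Icc (0:ℝ) 1, HasDerivWithinAt f (f' t) (Icc (0:ℝ) 1) t) →
      ContinuousOn f' (Icc (0:ℝ) 1) →
      c1Norm (phiTau τ f) (phiTauDeriv τ f f') ≤ C * c1Norm f f') ∧
    -- (iv) injectivity on continuous functions
    (∀ f : ℝ → EuclideanSpace ℝ (Fin n), ContinuousOn f (Icc (0:ℝ) 1) →
      (∀ t ∈ Icc (0:ℝ) 1, phiTau τ f t = 0) → ∀ t ∈ Icc (0:ℝ) 1, f t = 0) := by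
  have hτ2 : ContDiff ℝ 2 τ := hτ.of_le (WithTop.coe_le_coe.mpr le_top)
  have hτ01 : τ 0 = 0 ∧ τ 1 = 1 := ⟨hτ0 0 le_rfl, hτ1 1 le_rfl⟩
  have hmaps := mapsTo_Icc_of_deriv_pos hτ2.continuous hτ01.1 hτ01.2 hτ'
  have hcont : ∀ {f f' : ℝ → EuclideanSpace ℝ (Fin n)},
      (∀ t ∈ Icc (0:ℝ) 1, HasDerivWithinAt f (f' t) (Icc 0 1) t) → ContinuousOn f (Icc 0 1) :=
    fun hf t ht => (hf t ht).continuousWithinAt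
  refine ⟨fun f g c d t => phiTau_smul_add_smul g c d t, fun f f' hf hf' => ?_, ?_,
    fun f => eqOn_zero_of_phiTau_eqOn_zero hτ2.continuous hτ01.1 hτ01.2 hτ'⟩
  · have h0 := deriv_and_deriv_deriv_eq_zero_of_forall_le_eq hτ2 hτ0
    have h1 := deriv_and_deriv_deriv_eq_zero_of_forall_ge_eq hτ2 hτ1
    exact ⟨fun t ht => hasDerivWithinAt_phiTau (hτ2.differentiable (by norm_num) t)
        (hτ2.differentiable_deriv_two t) hmaps (hf _ (hmaps ht)),
      continuousOn_phiTauDeriv hτ2 hmaps (hcont hf) hf',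
      phiTau_eq_zero_of_deriv_eq_zero h0.1, phiTau_eq_zero_of_deriv_eq_zero h1.1,
      phiTauDeriv_eq_zero_of_deriv_eq_zero h0, phiTauDeriv_eq_zero_of_deriv_eq_zero h1⟩
  · obtain ⟨M, hMpos, hM⟩ := hτ2.exists_pos_bound_deriv_deriv isCompact_Icc
    exact ⟨2 * M + M ^ 2, by positivity, fun f f' hf hf' =>
      c1Norm_phiTau_le hmaps hM (hcont hf) hf'⟩

/-- Properties of `φ_τ`: linearity; it sends C¹ functions on `[0,1]` to C¹ functions
satisfying the A₀-boundary conditions, with the stated derivative; it is bounded for the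
C¹-norms; and it is injective on continuous functions. -/
theorem phiTau_properties (n : ℕ) (hn : 1 ≤ n) (τ : ℝ → ℝ)
    (hτ : ContDiff ℝ (⊤ : ℕ∞) τ)
    (hτ0 : ∀ t : ℝ, t ≤ 0 → τ t = 0)
    (hτ1 : ∀ t : ℝ, 1 ≤ t → τ t = 1)
    (hτ' : ∀ t ∈ Ioo (0:ℝ) 1, 0 < deriv τ t) :
    -- (i) linearity
    (∀ (f g : ℝ → EuclideanSpace ℝ (Fin n)) (c d : ℝ) (t : ℝ),
      phiTau τ (fun s => c • f s + d • g s) t = c • phiTau τ f t + d • phiTau τ g t) ∧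
    -- (ii) φ_τ(f) is C¹ with the stated derivative, and satisfies the A₀-boundary conditions
    (∀ (f f' : ℝ → EuclideanSpace ℝ (Fin n)),
      (∀ t ∈ Icc (0:ℝ) 1, HasDerivWithinAt f (f' t) (Icc (0:ℝ) 1) t) →
      ContinuousOn f' (Icc (0:ℝ) 1) →
      (∀ t ∈ Icc (0:ℝ) 1,
        HasDerivWithinAt (phiTau τ f) (phiTauDeriv τ f f' t) (Icc (0:ℝ) 1) t) ∧
      ContinuousOn (phiTauDeriv τ f f') (Icc (0:ℝ) 1) ∧
      phiTau τ f 0 = 0 ∧ phiTau τ f 1 = 0 ∧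
      phiTauDeriv τ f f' 0 = 0 ∧ phiTauDeriv τ f f' 1 = 0) ∧
    -- (iii) boundedness for the C¹-norms
    (∃ C > (0:ℝ), ∀ (f f' : ℝ → EuclideanSpace ℝ (Fin n)),
      (∀ t ∈ Icc (0:ℝ) 1, HasDerivWithinAt f (f' t) (Icc (0:ℝ) 1) t) →
      ContinuousOn f' (Icc (0:ℝ) 1) →
      c1Norm (phiTau τ f) (phiTauDeriv τ f f') ≤ C * c1Norm f f') ∧
    -- (iv) injectivity on continuous functions
    (∀ f : ℝ → EuclideanSpace ℝ (Fin n), ContinuousOn f (Icc (0:ℝ) 1) →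
      (∀ t ∈ Icc (0:ℝ) 1, phiTau τ f t = 0) → ∀ t ∈ Icc (0:ℝ) 1, f t = 0) :=
  phiTau_properties_general n τ hτ hτ0 hτ1 hτ'
end
end

section
/- Let ρ : ℝᵐ → (ℝⁿ →L ℝᵐ) be continuous. Let (a₀, γ₀) and (a₁, γ₁) be such that aᵢ : [0,1] → ℝⁿ are continuous with a₀(1) = 0 and a₁(0) = 0, γᵢ : [0,1] → ℝᵐ are C¹ on [0,1] with γᵢ′(t) = ρ(γᵢ(t))(aᵢ(t)) for all t ∈ [0,1], and γ₀(1) = γ₁(0). Define γ(t) = γ₀(2t) for t ≤ 1/2 and γ(t) = γ₁(2t−1) for t > 1/2. Then γ is C¹ on [0,1] and γ′(t) = ρ(γ(t))((a₁ ⊙ a₀)(t)) for all t ∈ [0,1]. -/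
open Set

noncomputable section

/-- The concatenation `a₁ ⊙ a₀`: `(a₁ ⊙ a₀)(t) = 2·a₀(2t)` if `t ≤ 1/2` and
`(a₁ ⊙ a₀)(t) = 2·a₁(2t−1)` if `t > 1/2`. -/
def odot {n : ℕ} (a₁ a₀ : ℝ → EuclideanSpace ℝ (Fin n)) : ℝ → EuclideanSpace ℝ (Fin n) :=
  fun t => if t ≤ 1/2 then (2:ℝ) • a₀ (2*t) else (2:ℝ) • a₁ (2*t - 1)

/-- The concatenation of the base paths: `γ(t) = γ₀(2t)` for `t ≤ 1/2`, `γ(t) = γ₁(2t−1)`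
for `t > 1/2`. -/
def baseConcat {m : ℕ} (γ₀ γ₁ : ℝ → EuclideanSpace ℝ (Fin m)) :
    ℝ → EuclideanSpace ℝ (Fin m) :=
  fun t => if t ≤ 1/2 then γ₀ (2*t) else γ₁ (2*t - 1)

/-!
Both halves of the concatenation are A-paths after the affine reparametrisations `t ↦ 2t` and
`t ↦ 2t - 1`, since the factor `2` they contribute to `γ′` is absorbed by the factor `2` in
`a₁ ⊙ a₀`. At the junction `t = 1/2` the two halves have one-sided derivatives
`2ρ(γ₀ 1)(a₀ 1)` and `2ρ(γ₁ 0)(a₁ 0)`, which agree because `γ₀ 1 = γ₁ 0` and `a₀ 1 = a₁ 0`;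
derivatives within two closed intervals sharing an endpoint then glue to a derivative within
their union.
-/

section APath

variable {E F : Type*} [NormedAddCommGroup E] [NormedSpace ℝ E]
  [NormedAddCommGroup F] [NormedSpace ℝ F]

def IsAPathOn (ρ : F → E →L[ℝ] F) (a : ℝ → E) (γ : ℝ → F) (s : Set ℝ) : Prop :=
  ∀ t ∈ s, HasDerivWithinAt γ (ρ (γ t) (a t)) s t

variable {ρ : F → E →L[ℝ] F} {a a' : ℝ → E} {γ γ' : ℝ → F} {s u : Set ℝ}

theorem IsAPathOn.congr (h : IsAPathOn ρ a γ s) (ha : EqOn a' a s) (hγ : EqOn γ' γ s) :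
    IsAPathOn ρ a' γ' s := fun t ht => by
  rw [ha ht, hγ ht]
  exact (h t ht).congr_of_mem hγ ht

theorem IsAPathOn.continuousOn (h : IsAPathOn ρ a γ s) : ContinuousOn γ s :=
  fun t ht => (h t ht).continuousWithinAt

theorem IsAPathOn.union_of_isClosed (hs : IsAPathOn ρ a γ s) (hu : IsAPathOn ρ a γ u)
    (hs_closed : IsClosed s) (hu_closed : IsClosed u) : IsAPathOn ρ a γ (s ∪ u) := by
  have extend : ∀ {v : Set ℝ}, IsAPathOn ρ a γ v → IsClosed v →
      ∀ t, HasDerivWithinAt γ (ρ (γ t) (a t)) v t := fun {v} hv hv_closed t => by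
    by_cases ht : t ∈ v
    · exact hv t ht
    · rw [hasDerivWithinAt_iff_hasFDerivWithinAt]
      exact HasFDerivWithinAt.of_notMem_closure (by rwa [hv_closed.closure_eq])
  exact fun t _ => (extend hs hs_closed t).union (extend hu hu_closed t)

theorem IsAPathOn.union_Icc {x y z : ℝ} (hl : IsAPathOn ρ a γ (Icc x y))
    (hr : IsAPathOn ρ a γ (Icc y z)) (hxy : x ≤ y) (hyz : y ≤ z) :
    IsAPathOn ρ a γ (Icc x z) := by
  rw [← Icc_union_Icc_eq_Icc hxy hyz]
  exact hl.union_of_isClosed hr isClosed_Icc isClosed_Icc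

theorem IsAPathOn.comp_two_mul (h : IsAPathOn ρ a γ (Icc 0 1)) :
    IsAPathOn ρ (fun t => (2:ℝ) • a (2*t)) (fun t => γ (2*t)) (Icc 0 (1/2)) := fun t ht => by
  have maps : MapsTo (fun s : ℝ => 2*s) (Icc 0 (1/2)) (Icc 0 1) := fun s hs => by
    constructor <;> linarith [hs.1, hs.2]
  rw [map_smul]
  exact (h _ (maps ht)).scomp t (hasDerivAt_const_mul 2).hasDerivWithinAt maps

theorem IsAPathOn.comp_two_mul_sub_one (h : IsAPathOn ρ a γ (Icc 0 1)) :
    IsAPathOn ρ (fun t => (2:ℝ) • a (2*t - 1)) (fun t => γ (2*t - 1)) (Icc (1/2) 1) :=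
    fun t ht => by
  have maps : MapsTo (fun s : ℝ => 2*s - 1) (Icc (1/2) 1) (Icc 0 1) := fun s hs => by
    constructor <;> linarith [hs.1, hs.2]
  rw [map_smul]
  exact (h _ (maps ht)).scomp t ((hasDerivAt_const_mul 2).sub_const 1).hasDerivWithinAt maps

end APath

section Concat

variable {n : ℕ}

theorem baseConcat_eqOn_left (γ₀ γ₁ : ℝ → EuclideanSpace ℝ (Fin n)) :
    EqOn (baseConcat γ₀ γ₁) (fun t => γ₀ (2*t)) (Icc 0 (1/2)) := fun t ht => by
  simp only [baseConcat, if_pos ht.2]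

theorem baseConcat_eqOn_right {γ₀ γ₁ : ℝ → EuclideanSpace ℝ (Fin n)} (h : γ₀ 1 = γ₁ 0) :
    EqOn (baseConcat γ₀ γ₁) (fun t => γ₁ (2*t - 1)) (Icc (1/2) 1) := fun t ht => by
  unfold baseConcat
  split_ifs with hle
  · obtain rfl : t = 1/2 := le_antisymm hle ht.1
    norm_num [h]
  · rfl

theorem odot_eqOn_left (a₁ a₀ : ℝ → EuclideanSpace ℝ (Fin n)) :
    EqOn (odot a₁ a₀) (fun t => (2:ℝ) • a₀ (2*t)) (Icc 0 (1/2)) := fun t ht => by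
  simp only [odot, if_pos ht.2]

theorem odot_eqOn_right {a₁ a₀ : ℝ → EuclideanSpace ℝ (Fin n)} (h : a₀ 1 = a₁ 0) :
    EqOn (odot a₁ a₀) (fun t => (2:ℝ) • a₁ (2*t - 1)) (Icc (1/2) 1) := fun t ht => by
  unfold odot
  split_ifs with hle
  · obtain rfl : t = 1/2 := le_antisymm hle ht.1
    norm_num [h]
  · rfl

theorem continuousOn_odot {a₁ a₀ : ℝ → EuclideanSpace ℝ (Fin n)}
    (ha₀ : ContinuousOn a₀ (Icc 0 1)) (ha₁ : ContinuousOn a₁ (Icc 0 1)) (h : a₀ 1 = a₁ 0) :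
    ContinuousOn (odot a₁ a₀) (Icc 0 1) := by
  have left : ContinuousOn (odot a₁ a₀) (Icc 0 (1/2)) := by
    refine ((ha₀.comp (by fun_prop) fun s hs => ?_).const_smul (2:ℝ)).congr
      (odot_eqOn_left a₁ a₀)
    constructor <;> linarith [hs.1, hs.2]
  have right : ContinuousOn (odot a₁ a₀) (Icc (1/2) 1) := by
    refine ((ha₁.comp (by fun_prop) fun s hs => ?_).const_smul (2:ℝ)).congr (odot_eqOn_right h)
    constructor <;> linarith [hs.1, hs.2]
  rw [← Icc_union_Icc_eq_Icc (by norm_num : (0:ℝ) ≤ 1/2) (by norm_num : (1/2:ℝ) ≤ 1)]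
  exact left.union_of_isClosed right isClosed_Icc isClosed_Icc

end Concat

/-- The concatenation of two composable A-paths (whose fibre components vanish at the
matching endpoints) is an A-path whose base path is the concatenation of the base paths:
`γ` is C¹ on `[0,1]` and `γ′(t) = ρ(γ(t))((a₁ ⊙ a₀)(t))`. -/
theorem concat_of_apaths (m n : ℕ)
    (ρ : EuclideanSpace ℝ (Fin m) → EuclideanSpace ℝ (Fin n) →L[ℝ] EuclideanSpace ℝ (Fin m))
    (hρ : Continuous ρ)
    (a₀ a₁ : ℝ → EuclideanSpace ℝ (Fin n))
    (ha₀ : ContinuousOn a₀ (Icc (0:ℝ) 1)) (ha₁ : ContinuousOn a₁ (Icc (0:ℝ) 1))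
    (h₀1 : a₀ 1 = 0) (h₁0 : a₁ 0 = 0)
    (γ₀ γ₁ : ℝ → EuclideanSpace ℝ (Fin m))
    (hγ₀ : ∀ t ∈ Icc (0:ℝ) 1, HasDerivWithinAt γ₀ (ρ (γ₀ t) (a₀ t)) (Icc (0:ℝ) 1) t)
    (hγ₁ : ∀ t ∈ Icc (0:ℝ) 1, HasDerivWithinAt γ₁ (ρ (γ₁ t) (a₁ t)) (Icc (0:ℝ) 1) t)
    (hmatch : γ₀ 1 = γ₁ 0) :
    (∀ t ∈ Icc (0:ℝ) 1,
      HasDerivWithinAt (baseConcat γ₀ γ₁)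
        (ρ (baseConcat γ₀ γ₁ t) (odot a₁ a₀ t)) (Icc (0:ℝ) 1) t) ∧
    ContinuousOn (fun t => ρ (baseConcat γ₀ γ₁ t) (odot a₁ a₀ t)) (Icc (0:ℝ) 1) := by
  have ha : a₀ 1 = a₁ 0 := h₀1.trans h₁0.symm
  have hpath : IsAPathOn ρ (odot a₁ a₀) (baseConcat γ₀ γ₁) (Icc 0 1) :=
    IsAPathOn.union_Icc
      ((IsAPathOn.comp_two_mul hγ₀).congr (odot_eqOn_left a₁ a₀) (baseConcat_eqOn_left γ₀ γ₁))
      ((IsAPathOn.comp_two_mul_sub_one hγ₁).congr (odot_eqOn_right ha)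
        (baseConcat_eqOn_right hmatch))
      (by norm_num) (by norm_num)
  exact ⟨hpath,
    (hρ.comp_continuousOn hpath.continuousOn).clm_apply (continuousOn_odot ha₀ ha₁ ha)⟩
end
end
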